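/- Let f : D → {0,1} be a partial Boolean function with D ⊆ {0,1}^M, let ε ∈ [0,1/2), and let d ≥ 0 be an integer. The ε-approximate degree of f exceeds d if and only if there exists a function ψ : {0,1}^M → ℝ such that: (1) ψ has pure high degree d; (2) ‖ψ‖₁ = 1; and (3) ∑_{x∈D} ψ(x)f(x) − ∑_{x∉D} |ψ(x)| > ε. -/
import Mathlib


open MvPolynomial
open scoped Classical

noncomputable section

/-- The real value of a Boolean: `1` for `true`, `0` for `false`. -/
def bval (b : Bool) : ℝ := if b then 1 else 0

/-- Evaluation of a real multilinear polynomial at a Boolean point of `{0,1}^σ`. -/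
def pEval {σ : Type*} (p : MvPolynomial σ ℝ) (x : σ → Bool) : ℝ :=
  MvPolynomial.eval (fun i => bval (x i)) p

/-- `p` approximates the partial Boolean function `f` (with domain `D`) to error `ε`. -/
def ApproxBy {σ : Type*} (D : Set (σ → Bool)) (f : (σ → Bool) → Bool) (ε : ℝ)
    (p : MvPolynomial σ ℝ) : Prop :=
  (∀ x ∈ D, |pEval p x - bval (f x)| ≤ ε) ∧ ∀ x ∉ D, |pEval p x| ≤ 1 + ε

/-- The `ε`-approximate degree of the partial Boolean function `f` with domain `D`. -/
noncomputable def adeg {σ : Type*} (D : Set (σ → Bool)) (f : (σ → Bool) → Bool) (ε : ℝ) : ℕ :=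
  sInf {d | ∃ p : MvPolynomial σ ℝ, ApproxBy D f ε p ∧ p.totalDegree = d}

/-- `ψ` has pure high degree `d`: it is orthogonal to every polynomial of degree at most `d`. -/
def PureHighDeg {σ : Type*} [Fintype σ] [DecidableEq σ] (d : ℕ)
    (ψ : (σ → Bool) → ℝ) : Prop :=
  ∀ p : MvPolynomial σ ℝ, p.totalDegree ≤ d → ∑ x : σ → Bool, ψ x * pEval p x = 0

-- evaluation as a linear map
def evalL (M : ℕ) : MvPolynomial (Fin M) ℝ →ₗ[ℝ] ((Fin M → Bool) → ℝ) where
  toFun p := pEval p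
  map_add' p q := by funext x; simp [pEval]
  map_smul' c p := by funext x; simp [pEval, smul_eval]

-- indicator polynomial
def indP {M : ℕ} (y : Fin M → Bool) : MvPolynomial (Fin M) ℝ :=
  ∏ i, (if y i then X i else 1 - X i)

lemma pEval_indP {M : ℕ} (y x : Fin M → Bool) :
    pEval (indP y) x = if x = y then 1 else 0 := by
  unfold pEval indP
  rw [map_prod]
  by_cases h : x = y
  · subst h
    rw [if_pos rfl]
    apply Finset.prod_eq_one
    intro i _
    by_cases hy : x i <;> simp [hy, bval]
  · rw [if_neg h]
    obtain ⟨i, hi⟩ : ∃ i, x i ≠ y i := by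
      by_contra hc; push_neg at hc; exact h (funext hc)
    apply Finset.prod_eq_zero (Finset.mem_univ i)
    rcases Bool.eq_false_or_eq_true (y i) with hy | hy <;>
      rcases Bool.eq_false_or_eq_true (x i) with hx | hx <;>
        simp_all [bval]

def interp {M : ℕ} (F : (Fin M → Bool) → ℝ) : MvPolynomial (Fin M) ℝ :=
  ∑ y, F y • indP y

lemma pEval_interp {M : ℕ} (F : (Fin M → Bool) → ℝ) (x : Fin M → Bool) :
    pEval (interp F) x = F x := by
  unfold pEval interp
  rw [map_sum]
  have : ∀ y, (eval fun i => bval (x i)) (F y • indP y) = F y * (if x = y then 1 else 0) := by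
    intro y; rw [smul_eval]; congr 1; exact pEval_indP y x
  simp_rw [this, mul_ite, mul_one, mul_zero]
  simp

lemma exists_approx {M : ℕ} (D : Set (Fin M → Bool)) (f : (Fin M → Bool) → Bool)
    (ε : ℝ) (hε0 : 0 ≤ ε) : ∃ p : MvPolynomial (Fin M) ℝ, ApproxBy D f ε p := by
  refine ⟨interp (fun y => if y ∈ D then bval (f y) else 0), ?_, ?_⟩
  · intro x hx; rw [pEval_interp]; simp [hx, hε0]
  · intro x hx; rw [pEval_interp]; simp [hx]; linarith

lemma adeg_lt_iff {M : ℕ} (D : Set (Fin M → Bool)) (f : (Fin M → Bool) → Bool)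
    (ε : ℝ) (hε0 : 0 ≤ ε) (d : ℕ) :
    d < adeg D f ε ↔ ¬ ∃ p : MvPolynomial (Fin M) ℝ, ApproxBy D f ε p ∧ p.totalDegree ≤ d := by
  have hne : {e | ∃ p : MvPolynomial (Fin M) ℝ, ApproxBy D f ε p ∧ p.totalDegree = e}.Nonempty := by
    obtain ⟨p, hp⟩ := exists_approx D f ε hε0
    exact ⟨p.totalDegree, p, hp, rfl⟩
  constructor
  · rintro h ⟨p, hp, hpd⟩
    have := Nat.sInf_le (s := {e | ∃ p : MvPolynomial (Fin M) ℝ, ApproxBy D f ε p ∧ p.totalDegree = e}) ⟨p, hp, rfl⟩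
    unfold adeg at h
    omega
  · intro h
    have hmem := Nat.sInf_mem hne
    obtain ⟨p, hp, hpd⟩ := hmem
    unfold adeg
    by_contra hc
    push_neg at hc
    exact h ⟨p, hp, by omega⟩

lemma easy_dir {M : ℕ} (D : Set (Fin M → Bool)) (f : (Fin M → Bool) → Bool)
    (ε : ℝ) (d : ℕ) (ψ : (Fin M → Bool) → ℝ)
    (hphd : PureHighDeg d ψ) (hnorm : (∑ x : Fin M → Bool, |ψ x|) = 1)
    (hcorr : (∑ x : Fin M → Bool, (if x ∈ D then ψ x * bval (f x) else -|ψ x|)) > ε)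
    (p : MvPolynomial (Fin M) ℝ) (hap : ApproxBy D f ε p) (hdeg : p.totalDegree ≤ d) :
    False := by
  have h0 := hphd p hdeg
  have key : (∑ x : Fin M → Bool, (if x ∈ D then ψ x * bval (f x) else -|ψ x|)) ≤ ε := by
    calc (∑ x : Fin M → Bool, (if x ∈ D then ψ x * bval (f x) else -|ψ x|))
        = ∑ x : Fin M → Bool, ((if x ∈ D then ψ x * bval (f x) else -|ψ x|) - ψ x * pEval p x) := by
          rw [Finset.sum_sub_distrib, h0, sub_zero]
      _ ≤ ∑ x : Fin M → Bool, ε * |ψ x| := by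
          apply Finset.sum_le_sum
          intro x _
          by_cases hx : x ∈ D
          · rw [if_pos hx]
            have h1 : |pEval p x - bval (f x)| ≤ ε := hap.1 x hx
            have h2 : ψ x * bval (f x) - ψ x * pEval p x = ψ x * (bval (f x) - pEval p x) := by ring
            rw [h2]
            calc ψ x * (bval (f x) - pEval p x) ≤ |ψ x * (bval (f x) - pEval p x)| := le_abs_self _
              _ = |ψ x| * |pEval p x - bval (f x)| := by rw [abs_mul, abs_sub_comm]
              _ ≤ |ψ x| * ε := by apply mul_le_mul_of_nonneg_left h1 (abs_nonneg _)
              _ = ε * |ψ x| := mul_comm _ _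
          · rw [if_neg hx]
            have h1 : |pEval p x| ≤ 1 + ε := hap.2 x hx
            have h2 : ψ x * pEval p x ≥ -(|ψ x| * (1 + ε)) := by
              have := abs_mul (ψ x) (pEval p x) ▸ neg_abs_le (ψ x * pEval p x)
              have h3 : |ψ x| * |pEval p x| ≤ |ψ x| * (1 + ε) :=
                mul_le_mul_of_nonneg_left h1 (abs_nonneg _)
              nlinarith [neg_abs_le (ψ x * pEval p x), abs_mul (ψ x) (pEval p x)]
            nlinarith
      _ = ε := by rw [← Finset.mul_sum, hnorm, mul_one]
  linarith

def sgn (t : ℝ) : ℝ := if 0 ≤ t then 1 else -1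

lemma mul_sgn (t : ℝ) : t * sgn t = |t| := by
  unfold sgn; split
  · rw [mul_one, abs_of_nonneg ‹_›]
  · rw [abs_of_neg (lt_of_not_ge ‹_›)]; ring


lemma hard_dir {M : ℕ} (D : Set (Fin M → Bool)) (f : (Fin M → Bool) → Bool)
    (ε : ℝ) (hε0 : 0 ≤ ε) (d : ℕ)
    (h : ¬ ∃ p : MvPolynomial (Fin M) ℝ, ApproxBy D f ε p ∧ p.totalDegree ≤ d) :
    ∃ ψ : (Fin M → Bool) → ℝ,
      PureHighDeg d ψ ∧
      (∑ x : Fin M → Bool, |ψ x|) = 1 ∧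
      (∑ x : Fin M → Bool, (if x ∈ D then ψ x * bval (f x) else -|ψ x|)) > ε := by
  set E := (Fin M → Bool) → ℝ
  set V : Submodule ℝ E := Submodule.map (evalL M) (restrictTotalDegree (Fin M) ℝ d) with hV
  set C : Set E := Set.univ.pi fun x =>
    if x ∈ D then Set.Icc (bval (f x) - ε) (bval (f x) + ε) else Set.Icc (-(1+ε)) (1+ε) with hC
  have hCconv : Convex ℝ C := convex_pi (fun i _ => by split <;> exact convex_Icc _ _)
  have hCcomp : IsCompact C := isCompact_univ_pi (fun i => by split <;> exact isCompact_Icc)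
  have hVclosed : IsClosed (V : Set E) := V.closed_of_finiteDimensional
  have hdisj : Disjoint C (V : Set E) := by
    rw [Set.disjoint_left]
    rintro a ha ⟨p, hp, rfl⟩
    rw [SetLike.mem_coe, mem_restrictTotalDegree] at hp
    rw [Set.mem_univ_pi] at ha
    apply h
    refine ⟨p, ⟨?_, ?_⟩, hp⟩
    · intro x hx
      have hxx := ha x
      rw [if_pos hx, Set.mem_Icc] at hxx
      have hax : (evalL M) p x = pEval p x := rfl
      rw [hax] at hxx
      rw [abs_le]
      exact ⟨by linarith [hxx.1], by linarith [hxx.2]⟩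
    · intro x hx
      have hxx := ha x
      rw [if_neg hx, Set.mem_Icc] at hxx
      have hax : (evalL M) p x = pEval p x := rfl
      rw [hax] at hxx
      rw [abs_le]
      exact ⟨by linarith [hxx.1], by linarith [hxx.2]⟩
  obtain ⟨φ, u, v, hCu, huv, hVv⟩ :=
    geometric_hahn_banach_compact_closed hCconv hCcomp V.convex hVclosed hdisj
  -- φ vanishes on V
  have hφ0 : ∀ b ∈ V, φ b = 0 := by
    intro b hb
    by_contra hne
    have hall : ∀ t : ℝ, v < t * φ b := by
      intro t
      have := hVv (t • b) (V.smul_mem t hb)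
      simpa [map_smul, smul_eq_mul] using this
    have := hall ((v - 1) / φ b)
    rw [div_mul_cancel₀ _ hne] at this
    linarith
  have hv0 : v < 0 := by
    have := hVv 0 V.zero_mem
    simpa using this
  have hCneg : ∀ a ∈ C, φ a < 0 := fun a ha => lt_trans (hCu a ha) (lt_trans huv hv0)
  -- the dual vector
  set ψ₀ : E := fun x => -φ (Pi.single x 1) with hψ₀
  have key : ∀ g : E, ∑ x : Fin M → Bool, ψ₀ x * g x = -φ g := by
    intro g
    have hg : g = ∑ x : Fin M → Bool, g x • (Pi.single x 1 : (Fin M → Bool) → ℝ) := by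
      funext y
      rw [Finset.sum_apply]
      simp [Pi.single_apply, mul_ite, Finset.sum_ite_eq]
    conv_rhs => rw [hg]
    rw [map_sum, ← Finset.sum_neg_distrib]
    apply Finset.sum_congr rfl
    intro x _
    rw [map_smul, smul_eq_mul, hψ₀]
    ring
  have hPHD0 : ∀ p : MvPolynomial (Fin M) ℝ, p.totalDegree ≤ d →
      ∑ x : Fin M → Bool, ψ₀ x * pEval p x = 0 := by
    intro p hp
    have : (fun x => pEval p x) = evalL M p := rfl
    have hmem : evalL M p ∈ V := ⟨p, (mem_restrictTotalDegree _ d p).mpr hp, rfl⟩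
    calc ∑ x : Fin M → Bool, ψ₀ x * pEval p x = -φ (evalL M p) := key _
      _ = 0 := by rw [hφ0 _ hmem, neg_zero]
  -- the extremal point of C
  set astar : E := fun x => if x ∈ D then bval (f x) - ε * sgn (ψ₀ x) else -((1+ε) * sgn (ψ₀ x)) with hast
  have hsgn_abs : ∀ t : ℝ, sgn t = 1 ∨ sgn t = -1 := by
    intro t; unfold sgn; split <;> simp
  have haC : astar ∈ C := by
    rw [hC, Set.mem_univ_pi]
    intro x
    by_cases hx : x ∈ D
    · rw [if_pos hx]
      have hax : astar x = bval (f x) - ε * sgn (ψ₀ x) := by rw [hast]; simp [hx]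
      rw [hax, Set.mem_Icc]
      rcases hsgn_abs (ψ₀ x) with hs | hs <;> rw [hs] <;> constructor <;> linarith
    · rw [if_neg hx]
      have hax : astar x = -((1+ε) * sgn (ψ₀ x)) := by rw [hast]; simp [hx]
      rw [hax, Set.mem_Icc]
      rcases hsgn_abs (ψ₀ x) with hs | hs <;> rw [hs] <;> constructor <;> linarith
  have hpos : 0 < ∑ x : Fin M → Bool, ψ₀ x * astar x := by
    rw [key]
    linarith [hCneg astar haC]
  set N : ℝ := ∑ x : Fin M → Bool, |ψ₀ x| with hN
  set corr0 : ℝ := ∑ x : Fin M → Bool, (if x ∈ D then ψ₀ x * bval (f x) else -|ψ₀ x|) with hcorr0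
  have hsum : ∑ x : Fin M → Bool, ψ₀ x * astar x = corr0 - ε * N := by
    rw [hcorr0, hN, Finset.mul_sum, ← Finset.sum_sub_distrib]
    apply Finset.sum_congr rfl
    intro x _
    by_cases hx : x ∈ D
    · simp only [hast, hx, if_pos]
      have := mul_sgn (ψ₀ x)
      nlinarith [mul_sgn (ψ₀ x)]
    · simp only [hast, hx, if_neg, not_false_iff]
      nlinarith [mul_sgn (ψ₀ x)]
  have hcN : corr0 > ε * N := by rw [hsum] at hpos; linarith
  have hN0 : 0 < N := by
    by_contra hle
    push_neg at hle
    have hNnn : (0:ℝ) ≤ N := Finset.sum_nonneg (fun x _ => abs_nonneg (ψ₀ x))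
    have hNz : N = 0 := le_antisymm hle hNnn
    have hzero : ∀ x ∈ (Finset.univ : Finset (Fin M → Bool)), |ψ₀ x| = (0:ℝ) :=
      (Finset.sum_eq_zero_iff_of_nonneg (fun x _ => abs_nonneg (ψ₀ x))).mp hNz
    have hψz : ∀ x, ψ₀ x = 0 := fun x => abs_eq_zero.mp (hzero x (Finset.mem_univ x))
    have hc0 : corr0 = 0 := by
      rw [hcorr0]
      apply Finset.sum_eq_zero
      intro x _
      rw [hψz x]
      simp
    have := hcN
    rw [hc0, hNz, mul_zero] at this
    exact lt_irrefl 0 this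
  refine ⟨fun x => ψ₀ x / N, ?_, ?_, ?_⟩
  · intro p hp
    have : ∑ x : Fin M → Bool, ψ₀ x / N * pEval p x
        = (∑ x : Fin M → Bool, ψ₀ x * pEval p x) / N := by
      rw [Finset.sum_div]
      apply Finset.sum_congr rfl
      intro x _; ring
    rw [this, hPHD0 p hp, zero_div]
  · have : ∀ x : Fin M → Bool, |ψ₀ x / N| = |ψ₀ x| / N := by
      intro x; rw [abs_div, abs_of_pos hN0]
    simp_rw [this]
    rw [← Finset.sum_div, ← hN, div_self (ne_of_gt hN0)]
  · have heq : ∑ x : Fin M → Bool, (if x ∈ D then ψ₀ x / N * bval (f x) else -|ψ₀ x / N|)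
        = corr0 / N := by
      rw [hcorr0, Finset.sum_div]
      apply Finset.sum_congr rfl
      intro x _
      by_cases hx : x ∈ D
      · simp only [hx, if_pos]; ring
      · simp only [hx, if_neg, not_false_iff]
        rw [abs_div, abs_of_pos hN0, neg_div]
    rw [heq, gt_iff_lt, lt_div_iff₀ hN0]
    linarith

/-- Dual characterization of approximate degree: the `ε`-approximate
degree of `f` exceeds `d` iff there is a dual polynomial `ψ` of pure high degree `d`, unit
`ℓ₁` norm, and correlation greater than `ε` with `f`. -/
theorem stmt4 (M : ℕ) (D : Set (Fin M → Bool)) (f : (Fin M → Bool) → Bool)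
    (ε : ℝ) (hε0 : 0 ≤ ε) (hε1 : ε < 1/2) (d : ℕ) :
    d < adeg D f ε ↔
      ∃ ψ : (Fin M → Bool) → ℝ,
        PureHighDeg d ψ ∧
        (∑ x : Fin M → Bool, |ψ x|) = 1 ∧
        (∑ x : Fin M → Bool, (if x ∈ D then ψ x * bval (f x) else -|ψ x|)) > ε := by
  rw [adeg_lt_iff D f ε hε0 d]
  constructor
  · exact hard_dir D f ε hε0 d
  · rintro ⟨ψ, h1, h2, h3⟩ ⟨p, hap, hdeg⟩
    exact easy_dir D f ε d ψ h1 h2 h3 p hap hdeg
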